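/- In the orthogonal iTRS over the signature {f (binary), a, b (constants)} with the single collapsing rule f(x,y) → x, the infinite term s defined corecursively by s = f(f(s,b),a) rewrites by strongly convergent reductions of length ω both to t₁ defined by t₁ = f(t₁,a) and to t₂ defined by t₂ = f(t₂,b), and t₁ and t₂ have no common reduct; hence this iTRS is not infinitarily confluent. -/

import Mathlib

/-!
Infinitary term rewriting: possibly infinite first-order terms, infinitary
term rewriting systems (iTRSs), strongly convergent transfinite reductions,
parallel steps, multi-steps (complete developments), and clusters,
following Endrullis–Grabmayer–Hendriks–Klop–van Oostrom,
"Infinitary Term Rewriting for Weakly Orthogonal Systems".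
-/

namespace WOInf

/-- Positions in terms: finite sequences of naturals (child indices, `1`-based). -/
abbrev Pos : Type := List ℕ

/-- Possibly infinite terms over the signature `(F, ar)` with variables `V`:
partial maps from positions to symbols with defined root, whose domain
respects arities (the `i`-th child of a node is defined exactly when the node
carries a function symbol `f` and `1 ≤ i ≤ ar f`); such a domain is
automatically nonempty and prefix-closed. -/
structure Term (F V : Type) (ar : F → ℕ) : Type where
  val : Pos → Option (F ⊕ V)
  root_isSome : (val []).isSome
  node : ∀ p i, (val (p ++ [i])).isSome ↔
      ∃ f, val p = some (Sum.inl f) ∧ 1 ≤ i ∧ i ≤ ar f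

/-- Finite terms (used for left-hand sides of rules). -/
inductive FTerm (F V : Type) (ar : F → ℕ) : Type
  | var : V → FTerm F V ar
  | app : (f : F) → (Fin (ar f) → FTerm F V ar) → FTerm F V ar

variable {F V : Type} {ar : F → ℕ}

/-- The symbol of a finite term at a position (child indices `1`-based). -/
def FTerm.val : FTerm F V ar → Pos → Option (F ⊕ V)
  | .var x, [] => some (Sum.inr x)
  | .app f _, [] => some (Sum.inl f)
  | .var _, _ :: _ => none
  | .app f ts, i :: p =>
      if h : 1 ≤ i ∧ i ≤ ar f then FTerm.val (ts ⟨i - 1, by omega⟩) p else none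

/-- An infinitary term rewriting system (iTRS): finitely many rules
`ℓ → r` where `ℓ` is a finite non-variable term, `r` is a possibly infinite
term, and every variable of `r` occurs in `ℓ`. -/
structure ITRS (F V : Type) (ar : F → ℕ) : Type 1 where
  /-- the (finite) index type of rules -/
  R : Type
  finR : Finite R
  /-- left-hand sides -/
  lhs : R → FTerm F V ar
  /-- right-hand sides -/
  rhs : R → Term F V ar
  lhs_not_var : ∀ ρ x, lhs ρ ≠ FTerm.var x
  var_cond : ∀ ρ x p, (rhs ρ).val p = some (Sum.inr x) →
      ∃ q, (lhs ρ).val q = some (Sum.inr x)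

/-- The subtree of `t` at position `p` is (extensionally) the term `u`. -/
def SubtreeEq (t : Term F V ar) (p : Pos) (u : Term F V ar) : Prop :=
  ∀ q, t.val (p ++ q) = u.val q

/-- The subterm of `t` at position `p` is the instance of the finite term `ℓ`
under the substitution `σ`. -/
def MatchesAt (ℓ : FTerm F V ar) (σ : V → Term F V ar)
    (t : Term F V ar) (p : Pos) : Prop :=
  (∀ q f, ℓ.val q = some (Sum.inl f) → t.val (p ++ q) = some (Sum.inl f)) ∧
  (∀ q x, ℓ.val q = some (Sum.inr x) → SubtreeEq t (p ++ q) (σ x))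

/-- The subterm of `t` at position `p` is the instance of the possibly
infinite term `r` under the substitution `σ`. -/
def InstanceAt (r : Term F V ar) (σ : V → Term F V ar)
    (t : Term F V ar) (p : Pos) : Prop :=
  (∀ q f, r.val q = some (Sum.inl f) → t.val (p ++ q) = some (Sum.inl f)) ∧
  (∀ q x, r.val q = some (Sum.inr x) → SubtreeEq t (p ++ q) (σ x))

variable (S : ITRS F V ar)

/-- A redex (occurrence): a position together with a rule. -/
structure Redex (S : ITRS F V ar) : Type where
  pos : Pos
  rule : S.R

/-- `u` is a redex occurrence in `t`. -/
def IsRedex (t : Term F V ar) (u : Redex S) : Prop :=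
  ∃ σ, MatchesAt (S.lhs u.rule) σ t u.pos

/-- `t` rewrites to `t'` by contracting the redex occurrence `u`. -/
def StepRedex (u : Redex S) (t t' : Term F V ar) : Prop :=
  ∃ σ, MatchesAt (S.lhs u.rule) σ t u.pos ∧
       InstanceAt (S.rhs u.rule) σ t' u.pos ∧
       ∀ q, ¬ u.pos <+: q → t'.val q = t.val q

/-- `t` rewrites to `t'` by a rewrite step at position `p`. -/
def StepAt (p : Pos) (t t' : Term F V ar) : Prop :=
  ∃ ρ : S.R, StepRedex S ⟨p, ρ⟩ t t'

/-- The pattern of a redex: the positions of the function symbols of its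
left-hand side, placed at its position. -/
def Redex.pattern {S : ITRS F V ar} (u : Redex S) : Set Pos :=
  {p | ∃ q f, p = u.pos ++ q ∧ (S.lhs u.rule).val q = some (Sum.inl f)}

/-- Two redexes overlap if their patterns share a position. -/
def Overlap (u v : Redex S) : Prop := (u.pattern ∩ v.pattern).Nonempty

/-- A multi-redex in `t`: a set of pairwise non-overlapping redex
occurrences of `t`. -/
def IsMultiRedex (t : Term F V ar) (U : Set (Redex S)) : Prop :=
  (∀ u ∈ U, IsRedex S t u) ∧ U.Pairwise fun u v => ¬ Overlap S u v

/-- Left-linearity: no left-hand side contains a repeated variable. -/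
def LeftLinear : Prop :=
  ∀ ρ p q x, (S.lhs ρ).val p = some (Sum.inr x) →
    (S.lhs ρ).val q = some (Sum.inr x) → p = q

/-- Weak orthogonality: left-linear and all critical pairs are trivial;
for left-linear systems the latter is equivalent to the requirement that
contracting either of two overlapping redexes of any term yields the same
result. -/
def WeaklyOrthogonal : Prop :=
  LeftLinear S ∧
  ∀ (t t₁ t₂ : Term F V ar) (u v : Redex S), Overlap S u v →
    StepRedex S u t t₁ → StepRedex S v t t₂ → t₁ = t₂

/-- A rule is collapsing if its right-hand side is a variable. -/
def Collapsing (ρ : S.R) : Prop := ∃ x, (S.rhs ρ).val [] = some (Sum.inr x)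

/-- The system has no collapsing rules. -/
def NonCollapsing : Prop := ∀ ρ, ¬ Collapsing S ρ

/-- The system is a TRS: all right-hand sides are finite terms. -/
def IsTRS : Prop := ∀ ρ, {p : Pos | ((S.rhs ρ).val p).isSome}.Finite

/-- Two terms agree at all positions of depth at most `k`
(equivalently, their distance is at most `2^{-k}`). -/
def AgreeUpTo (k : ℕ) (s t : Term F V ar) : Prop :=
  ∀ p : Pos, p.length ≤ k → s.val p = t.val p

/-- `IsSCRed S α f p s t`: the data `(f, p)` constitutes a strongly convergent
reduction of ordinal length `α` from `s` to `t`: `f β` is the `β`-th term,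
`p β` the position of the `β`-th step, and every limit ordinal `λ ≤ α` is
approached with the terms converging to `f λ` and the depths of the steps
tending to infinity. -/
def IsSCRed (α : Ordinal) (f : Ordinal → Term F V ar) (p : Ordinal → Pos)
    (s t : Term F V ar) : Prop :=
  f 0 = s ∧ f α = t ∧
  (∀ β < α, StepAt S (p β) (f β) (f (β + 1))) ∧
  ∀ l ≤ α, Order.IsSuccLimit l → ∀ k : ℕ, ∃ β < l, ∀ γ, β ≤ γ → γ < l →
    AgreeUpTo k (f γ) (f l) ∧ k ≤ (p γ).length

/-- The infinitary rewriting relation `s ↠∞ t`: there is a strongly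
convergent reduction (of some ordinal length) from `s` to `t`. -/
def IRed (s t : Term F V ar) : Prop :=
  ∃ (α : Ordinal.{0}) (f : Ordinal → Term F V ar) (p : Ordinal → Pos),
    IsSCRed S α f p s t

/-- `IsSContRed S α f p s`: a strongly continuous reduction sequence of
ordinal length `α` starting at `s`: convergence of the terms and depths
tending to infinity are required at every limit ordinal strictly below `α`. -/
def IsSContRed (α : Ordinal) (f : Ordinal → Term F V ar) (p : Ordinal → Pos)
    (s : Term F V ar) : Prop :=
  f 0 = s ∧
  (∀ β < α, StepAt S (p β) (f β) (f (β + 1))) ∧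
  ∀ l < α, Order.IsSuccLimit l → ∀ k : ℕ, ∃ β < l, ∀ γ, β ≤ γ → γ < l →
    AgreeUpTo k (f γ) (f l) ∧ k ≤ (p γ).length

/-- A strongly continuous reduction sequence of length `α` with step
positions `p` is divergent (not strongly convergent) if `α` is a limit
ordinal and the depths of the steps do not tend to infinity when
approaching `α`. -/
def Divergent (α : Ordinal) (p : Ordinal → Pos) : Prop :=
  Order.IsSuccLimit α ∧ ¬ ∀ k : ℕ, ∃ β < α, ∀ γ, β ≤ γ → γ < α → k ≤ (p γ).length

/-- A set of redexes at pairwise disjoint (parallel) positions. -/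
def ParallelSet (U : Set (Redex S)) : Prop :=
  U.Pairwise fun u v => ¬ u.pos <+: v.pos ∧ ¬ v.pos <+: u.pos

/-- The parallel step `t ⊸_U t'`: the simultaneous contraction (complete
development) of a set `U` of redexes of `t` at pairwise disjoint positions. -/
def ParStep (U : Set (Redex S)) (t t' : Term F V ar) : Prop :=
  ParallelSet S U ∧
  (∀ u ∈ U, ∃ σ, MatchesAt (S.lhs u.rule) σ t u.pos ∧
      InstanceAt (S.rhs u.rule) σ t' u.pos) ∧
  ∀ q, (∀ u ∈ U, ¬ u.pos <+: q) → t'.val q = t.val q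

/-- The descendants (residuals) of the position `q` across a rewrite step
with rule `ρ` at position `p`: positions not below `p` descend to themselves,
and positions within the substitution part are relocated according to the
occurrences of the corresponding variable in the right-hand side. -/
def Descendants (ρ : S.R) (p : Pos) (q : Pos) : Set Pos :=
  {q' | (¬ p <+: q ∧ q' = q) ∨
    ∃ q₁ q₂ x, q = p ++ q₁ ++ q₂ ∧ (S.lhs ρ).val q₁ = some (Sum.inr x) ∧
      ∃ q₁', (S.rhs ρ).val q₁' = some (Sum.inr x) ∧ q' = p ++ q₁' ++ q₂}

/-- The overlap relation on the redex occurrences of `t`. -/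
def OverlapIn (t : Term F V ar) (u v : Redex S) : Prop :=
  IsRedex S t u ∧ IsRedex S t v ∧ Overlap S u v

/-- A cluster in `t`: a nonempty connected component of the overlap relation
on the redex occurrences of `t`. -/
def IsCluster (t : Term F V ar) (c : Set (Redex S)) : Prop :=
  c.Nonempty ∧ (∀ u ∈ c, IsRedex S t u) ∧
  (∀ u ∈ c, ∀ v, IsRedex S t v → Overlap S u v → v ∈ c) ∧
  (∀ u ∈ c, ∀ v ∈ c, Relation.ReflTransGen (OverlapIn S t) u v)

/-- The pattern of a cluster: the union of the patterns of its redexes. -/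
def clusterPattern (c : Set (Redex S)) : Set Pos := ⋃ u ∈ c, u.pattern

/-- A `Y`-cluster: a cluster containing two redexes at parallel (disjoint)
positions. -/
def IsYCluster (c : Set (Redex S)) : Prop :=
  ∃ u ∈ c, ∃ v ∈ c, ¬ u.pos <+: v.pos ∧ ¬ v.pos <+: u.pos

/-- A cluster is infinite if the set of roots of its redexes is infinite. -/
def InfiniteCluster (c : Set (Redex S)) : Prop :=
  (Redex.pos '' c).Infinite

/-- A trivial cluster: a `Y`-cluster or an infinite `I`-cluster
(a cluster that is not a `Y`-cluster is an `I`-cluster). -/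
def TrivialCluster (c : Set (Redex S)) : Prop :=
  IsYCluster S c ∨ InfiniteCluster S c

/-- `IsDevelopment S α f rp U s t`: a (complete) development of the
multi-redex `U 0` of `s`: a strongly convergent reduction from `s` to `t` of
length `α`, each of whose steps contracts a member `rp β` of the current set
`U β` of residuals of `U 0`, where residuals are tracked along steps (via the
descendant relation) and along limits, and no residual is left at the end. -/
def IsDevelopment (α : Ordinal) (f : Ordinal → Term F V ar)
    (rp : Ordinal → Redex S) (U : Ordinal → Set (Redex S))
    (s t : Term F V ar) : Prop :=
  f 0 = s ∧ f α = t ∧ U α = ∅ ∧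
  (∀ β < α, rp β ∈ U β ∧ StepRedex S (rp β) (f β) (f (β + 1)) ∧
    U (β + 1) = ⋃ v ∈ U β \ {rp β},
      {w : Redex S | w.rule = v.rule ∧
        w.pos ∈ Descendants S (rp β).rule (rp β).pos v.pos}) ∧
  ∀ l ≤ α, Order.IsSuccLimit l →
    (U l = {u | ∃ β < l, ∀ γ, β ≤ γ → γ < l → u ∈ U γ}) ∧
    ∀ k : ℕ, ∃ β < l, ∀ γ, β ≤ γ → γ < l →
      AgreeUpTo k (f γ) (f l) ∧ k ≤ (rp γ).pos.length

/-- The multi-step `s ⊸_U₀ t`: a complete development of the multi-redex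
`U₀` of `s`. -/
def MultiStep (U₀ : Set (Redex S)) (s t : Term F V ar) : Prop :=
  IsMultiRedex S s U₀ ∧
  ∃ (α : Ordinal.{0}) (f : Ordinal → Term F V ar) (rp : Ordinal → Redex S)
    (U : Ordinal → Set (Redex S)), U 0 = U₀ ∧ IsDevelopment S α f rp U s t

/-- The multi-step rewrite relation `s ⊸ t`. -/
def MStep (s t : Term F V ar) : Prop := ∃ U₀, MultiStep S U₀ s t

end WOInf

namespace WOInf

/-- The signature of Example 5.5: a binary symbol `f` and constants `a`, `b`. -/
inductive F14 : Type
  | f : F14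
  | a : F14
  | b : F14
  deriving DecidableEq

/-- Arities: `f` is binary, `a` and `b` are constants. -/
def ar14 : F14 → ℕ
  | .f => 2
  | .a => 0
  | .b => 0

/-- Two variables `x`, `y`. -/
abbrev V14 : Type := Fin 2

/-- The term consisting of the single variable `x`. -/
def varTerm (x : V14) : Term F14 V14 ar14 where
  val p := if p = [] then some (Sum.inr x) else none
  root_isSome := by simp
  node := by
    intro p i
    try simp only
    constructor
    · intro h
      rw [if_neg (by simp : ¬ p ++ [i] = [])] at h
      simp at h
    · rintro ⟨g, hg, -, -⟩
      split at hg <;> simp_all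

/-- Spine values: `spineVal c lvl` is the infinite term `T lvl` where
`T lvl = f (T (!lvl)) (c lvl)` and each `c lvl` is a constant. -/
def spineVal (c : Bool → F14) : Bool → Pos → Option (F14 ⊕ V14)
  | _, [] => some (Sum.inl F14.f)
  | lvl, i :: p =>
      if i = 1 then spineVal c (!lvl) p
      else if i = 2 ∧ p = [] then some (Sum.inl (c lvl)) else none

lemma spineVal_node (c : Bool → F14) (hc : ∀ lv, ar14 (c lv) = 0) :
    ∀ (p : Pos) (lvl : Bool) (i : ℕ), (spineVal c lvl (p ++ [i])).isSome ↔
      ∃ g, spineVal c lvl p = some (Sum.inl g) ∧ 1 ≤ i ∧ i ≤ ar14 g := by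
  intro p
  induction p with
  | nil =>
    intro lvl i
    by_cases h1 : i = 1
    · subst h1; simp [spineVal, ar14]
    · by_cases h2 : i = 2
      · subst h2; simp [spineVal, ar14]
      · simp only [List.nil_append, spineVal, h1, if_false]
        rw [if_neg (by simp [h2])]
        simp only [Option.isSome_none, Bool.false_eq_true, false_iff]
        rintro ⟨g, hg, hi1, hi2⟩
        have hgf : g = F14.f := by
          have h' := hg
          simp only [spineVal, Option.some.injEq, Sum.inl.injEq] at h'
          exact h'.symm
        subst hgf
        simp [ar14] at hi2
        omega
  | cons j q ih =>
    intro lvl i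
    show (spineVal c lvl (j :: (q ++ [i]))).isSome ↔ _
    by_cases h1 : j = 1
    · subst h1
      simpa [spineVal] using ih (!lvl) i
    · by_cases h2 : j = 2 ∧ q = []
      · obtain ⟨h2a, h2b⟩ := h2
        subst h2a h2b
        simp only [spineVal, h1, if_false]
        rw [if_neg (by simp), if_pos (by simp)]
        simp only [Option.isSome_none, Bool.false_eq_true, false_iff]
        rintro ⟨g, hg, hi1, hi2⟩
        have : g = c lvl := by
          simp only [Option.some.injEq, Sum.inl.injEq] at hg
          exact hg.symm
        subst this
        rw [hc lvl] at hi2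
        omega
      · have hq : ¬ (j = 2 ∧ q ++ [i] = []) := by
          rintro ⟨-, h⟩; simp at h
        constructor
        · intro h
          simp only [spineVal, h1, if_false, if_neg hq] at h
          simp at h
        · rintro ⟨g, hg, -, -⟩
          simp only [spineVal, h1, if_false, if_neg h2] at hg
          simp at hg

/-- The infinite term `T lvl = f (T (!lvl)) (c lvl)` (for constants `c lvl`). -/
def spineTerm (c : Bool → F14) (hc : ∀ lv, ar14 (c lv) = 0) (lvl : Bool) :
    Term F14 V14 ar14 where
  val := spineVal c lvl
  root_isSome := by simp [spineVal]
  node p i := spineVal_node c hc p lvl i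

/-- `s = f (f (s, b), a)`. -/
def s14 : Term F14 V14 ar14 :=
  spineTerm (fun lv => if lv then F14.a else F14.b)
    (by intro lv; cases lv <;> rfl) true

/-- `t₁ = f (t₁, a)`. -/
def t14a : Term F14 V14 ar14 :=
  spineTerm (fun _ => F14.a) (fun _ => rfl) true

/-- `t₂ = f (t₂, b)`. -/
def t14b : Term F14 V14 ar14 :=
  spineTerm (fun _ => F14.b) (fun _ => rfl) true

/-- The orthogonal iTRS with the single collapsing rule `f(x, y) → x`. -/
def S14 : ITRS F14 V14 ar14 where
  R := PUnit
  finR := inferInstance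
  lhs _ := FTerm.app F14.f (fun i => FTerm.var i)
  rhs _ := varTerm 0
  lhs_not_var := by intro ρ x h; cases h
  var_cond := by
    intro ρ x p h
    have hx : x = 0 := by
      by_cases hp : p = [] <;> simp [varTerm, hp] at h
      exact h.symm
    subst hx
    refine ⟨[1], ?_⟩
    show FTerm.val _ [1] = _
    rw [show ([1] : Pos) = 1 :: [] from rfl]
    simp only [FTerm.val]
    rw [dif_pos (by constructor <;> norm_num [ar14])]
    rfl

end WOInf

namespace WOInf

/-! ### Auxiliary development for the proof -/

lemma Term.ext' {F V : Type} {ar : F → ℕ} {t u : Term F V ar}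
    (h : t.val = u.val) : t = u := by
  cases t; cases u; cases h; rfl

/-- sequence-indexed spine value -/
def seqVal (c : ℕ → F14) : Pos → Option (F14 ⊕ V14)
  | [] => some (Sum.inl F14.f)
  | i :: p => if i = 1 then seqVal (fun d => c (d+1)) p
      else if i = 2 ∧ p = [] then some (Sum.inl (c 0)) else none

lemma seqVal_nil (c : ℕ → F14) : seqVal c [] = some (Sum.inl F14.f) := rfl
lemma seqVal_one (c : ℕ → F14) (p : Pos) :
    seqVal c (1 :: p) = seqVal (fun d => c (d+1)) p := by simp [seqVal]
lemma seqVal_two (c : ℕ → F14) : seqVal c [2] = some (Sum.inl (c 0)) := by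
  simp [seqVal]

lemma seqVal_shift (c : ℕ → F14) (k : ℕ) (r : Pos) :
    seqVal c (List.replicate k 1 ++ r) = seqVal (fun d => c (d + k)) r := by
  induction k generalizing c with
  | zero => simp
  | succ k ih =>
      rw [List.replicate_succ, List.cons_append, seqVal_one, ih]
      congr 1
      all_goals funext d
      all_goals exact congrArg c (by omega)

lemma seqVal_cases (q : Pos) :
    (∃ m, q = List.replicate m 1) ∨ (∃ m, q = List.replicate m 1 ++ [2]) ∨
      ∀ c, seqVal c q = none := by
  induction q with
  | nil => exact Or.inl ⟨0, rfl⟩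
  | cons i p ih =>
      by_cases h1 : i = 1
      · subst h1
        rcases ih with ⟨m, rfl⟩ | ⟨m, rfl⟩ | h
        · exact Or.inl ⟨m+1, by rw [List.replicate_succ]⟩
        · exact Or.inr (Or.inl ⟨m+1, by rw [List.replicate_succ]; rfl⟩)
        · exact Or.inr (Or.inr fun c => by rw [seqVal_one]; exact h _)
      · by_cases h2 : i = 2 ∧ p = []
        · exact Or.inr (Or.inl ⟨0, by simp [h2.1, h2.2]⟩)
        · refine Or.inr (Or.inr fun c => ?_)
          simp [seqVal, h1, h2]

lemma seqVal_repl (c : ℕ → F14) (m : ℕ) :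
    seqVal c (List.replicate m 1) = some (Sum.inl F14.f) := by
  have := seqVal_shift c m []
  simpa [seqVal_nil] using this

lemma seqVal_repl2 (c : ℕ → F14) (m : ℕ) :
    seqVal c (List.replicate m 1 ++ [2]) = some (Sum.inl (c m)) := by
  rw [seqVal_shift, seqVal_two]; norm_num

lemma seqVal_node (c : ℕ → F14) (hc : ∀ m, ar14 (c m) = 0) (p : Pos) (i : ℕ) :
    (seqVal c (p ++ [i])).isSome ↔
      ∃ g, seqVal c p = some (Sum.inl g) ∧ 1 ≤ i ∧ i ≤ ar14 g := by
  induction p generalizing c with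
  | nil =>
      by_cases h1 : i = 1
      · subst h1; simp [seqVal, ar14]
      · by_cases h2 : i = 2
        · subst h2; simp [seqVal, ar14]
        · have e1 : seqVal c [i] = none := by simp [seqVal, h1, h2]
          rw [List.nil_append, e1, seqVal_nil]
          simp only [Option.isSome_none, Bool.false_eq_true, false_iff]
          rintro ⟨g, hg, hi1, hi2⟩
          obtain rfl : F14.f = g := by simpa using hg
          simp [ar14] at hi2; omega
  | cons j q ih =>
      show (seqVal c (j :: (q ++ [i]))).isSome ↔ _
      by_cases h1 : j = 1
      · subst h1
        rw [seqVal_one, seqVal_one]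
        exact ih _ (fun m => hc _)
      · by_cases h2 : j = 2 ∧ q = []
        · obtain ⟨rfl, rfl⟩ := h2
          simp only [seqVal, h1, if_false, List.nil_append]
          rw [if_neg (by simp), if_pos (by simp)]
          simp only [Option.isSome_none, Bool.false_eq_true, false_iff]
          rintro ⟨g, hg, hi1, hi2⟩
          obtain rfl : c 0 = g := by simpa using hg
          rw [hc 0] at hi2; omega
        · have hq : ¬ (j = 2 ∧ q ++ [i] = []) := by rintro ⟨-, h⟩; simp at h
          have e1 : seqVal c (j :: (q ++ [i])) = none := by
            simp only [seqVal, h1, if_false, if_neg hq]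
          have e2 : seqVal c (j :: q) = none := by
            simp only [seqVal, h1, if_false, if_neg h2]
          rw [e1, e2]; simp

/-- The term with spine-constants given by the sequence `c`. -/
def seqTerm (c : ℕ → F14) (hc : ∀ m, ar14 (c m) = 0) : Term F14 V14 ar14 where
  val := seqVal c
  root_isSome := by rw [seqVal_nil]; rfl
  node p i := seqVal_node c hc p i

@[simp] lemma seqTerm_val (c : ℕ → F14) (hc : ∀ m, ar14 (c m) = 0) :
    (seqTerm c hc).val = seqVal c := rfl

/-- A constant term. -/
def constTerm (g : F14) (hg : ar14 g = 0) : Term F14 V14 ar14 where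
  val p := if p = [] then some (Sum.inl g) else none
  root_isSome := by simp
  node := by
    intro p i
    show (if p ++ [i] = [] then some (Sum.inl g) else none).isSome ↔
      ∃ f', (if p = [] then some (Sum.inl g) else none) = some (Sum.inl f') ∧
        1 ≤ i ∧ i ≤ ar14 f'
    rw [if_neg (by simp : ¬ p ++ [i] = [])]
    simp only [Option.isSome_none, Bool.false_eq_true, false_iff]
    rintro ⟨f', hf', h1, h2⟩
    split at hf'
    · obtain rfl : g = f' := by simpa using hf'
      rw [hg] at h2; omega
    · simp at hf'

lemma seqVal_congr {c c' : ℕ → F14} (q : Pos)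
    (h : ∀ m, q = List.replicate m 1 ++ [2] → c m = c' m) :
    seqVal c q = seqVal c' q := by
  rcases seqVal_cases q with ⟨m, rfl⟩ | ⟨m, rfl⟩ | hn
  · rw [seqVal_repl, seqVal_repl]
  · rw [seqVal_repl2, seqVal_repl2, h m rfl]
  · rw [hn, hn]

lemma repl_prefix {j m : ℕ} (h : j ≤ m) :
    (List.replicate j 1 : Pos) <+: List.replicate m 1 :=
  ⟨List.replicate (m - j) 1, by rw [← List.replicate_add]; congr 1; omega⟩

lemma repl_prefix2 {j m : ℕ} (h : j ≤ m) :
    (List.replicate j 1 : Pos) <+: (List.replicate m 1 ++ [2]) :=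
  (repl_prefix h).trans (List.prefix_append _ _)

def dropAt (c : ℕ → F14) (j : ℕ) : ℕ → F14 := fun d => if d < j then c d else c (d + 1)

lemma dropAt_arZero {c : ℕ → F14} (hc : ∀ m, ar14 (c m) = 0) (j : ℕ) :
    ∀ m, ar14 (dropAt c j m) = 0 := by
  intro m; unfold dropAt; split <;> apply hc

lemma lhs_val (ρ : S14.R) (q : Pos) :
    (S14.lhs ρ).val q =
      if q = [] then some (Sum.inl F14.f)
      else if q = [1] then some (Sum.inr (0 : V14))
      else if q = [2] then some (Sum.inr (1 : V14))
      else none := by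
  rcases q with _ | ⟨i, p⟩
  · rfl
  · show FTerm.val (FTerm.app F14.f (fun i => FTerm.var i)) (i :: p) = _
    rw [FTerm.val]
    by_cases h : 1 ≤ i ∧ i ≤ ar14 F14.f
    · rw [dif_pos h]
      have hi2 : i ≤ 2 := h.2
      rcases p with _ | ⟨j, p'⟩
      · show some (Sum.inr _) = _
        rcases (by omega : i = 1 ∨ i = 2) with rfl | rfl
        · rfl
        · rfl
      · show (none : Option (F14 ⊕ V14)) = _
        have : ¬ (i :: j :: p' : Pos) = [1] := by simp
        have : ¬ (i :: j :: p' : Pos) = [2] := by simp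
        simp_all
    · rw [dif_neg h]
      have hi : ¬ i = 1 ∧ ¬ i = 2 := by
        constructor <;> rintro rfl <;> simp [ar14] at h
      have e1 : ¬ (i :: p : Pos) = [1] := by simp [hi.1]
      have e2 : ¬ (i :: p : Pos) = [2] := by simp [hi.2]
      simp [e1, e2]
      rfl

lemma varTerm_val (x : V14) (q : Pos) :
    (varTerm x).val q = if q = [] then some (Sum.inr x) else none := rfl

lemma rhs_val (ρ : S14.R) (q : Pos) :
    (S14.rhs ρ).val q = if q = [] then some (Sum.inr (0 : V14)) else none := rfl

/-- The key step lemma: contracting the redex at `1^j` in `seqTerm c` deletes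
index `j` from the sequence. -/
lemma step_drop (c : ℕ → F14) (hc : ∀ m, ar14 (c m) = 0) (j : ℕ) :
    StepAt S14 (List.replicate j 1) (seqTerm c hc)
      (seqTerm (dropAt c j) (dropAt_arZero hc j)) := by
  set A : Term F14 V14 ar14 := seqTerm (fun d => c (d + (j+1))) (fun m => hc _) with hA
  set B : Term F14 V14 ar14 := constTerm (c j) (hc j) with hB
  set σ : V14 → Term F14 V14 ar14 := fun x => if x = 0 then A else B with hσ
  have hσ0 : σ 0 = A := by rw [hσ]; simp
  have hσ1 : σ 1 = B := by rw [hσ]; norm_num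
  refine ⟨PUnit.unit, σ, ?_, ?_, ?_⟩
  · constructor
    · intro q f' hq
      rw [lhs_val] at hq
      split_ifs at hq with e1 e2 e3
      · obtain rfl : F14.f = f' := by simpa using hq
        subst e1
        show seqVal c (List.replicate j 1 ++ []) = _
        rw [List.append_nil, seqVal_repl]
      all_goals simp at hq
    · intro q x hq
      rw [lhs_val] at hq
      split_ifs at hq with e1 e2 e3
      case _ => simp at hq
      · obtain rfl : (0 : V14) = x := by simpa using hq
        subst e2
        intro r
        rw [hσ0]
        show seqVal c ((List.replicate j 1 ++ [1]) ++ r) = seqVal (fun d => c (d + (j+1))) r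
        have e : (List.replicate j 1 ++ [1] : Pos) = List.replicate (j+1) 1 :=
          List.replicate_succ'.symm
        rw [e, seqVal_shift]
      · obtain rfl : (1 : V14) = x := by simpa using hq
        subst e3
        intro r
        rw [hσ1, hB]
        show seqVal c ((List.replicate j 1 ++ [2]) ++ r) =
          (if r = [] then some (Sum.inl (c j)) else none)
        rw [List.append_assoc, seqVal_shift]
        by_cases hr : r = []
        · subst hr
          rw [if_pos rfl]
          show seqVal (fun d => c (d + j)) [2] = _
          rw [seqVal_two]
          norm_num
        · rw [if_neg hr]
          show seqVal (fun d => c (d + j)) (2 :: r) = none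
          simp [seqVal, hr]
      all_goals simp at hq
  · constructor
    · intro q f' hq
      rw [rhs_val] at hq
      all_goals split_ifs at hq
      all_goals simp at hq
    · intro q x hq
      rw [rhs_val] at hq
      split_ifs at hq with e1
      · obtain rfl : (0 : V14) = x := by simpa using hq
        subst e1
        intro r
        rw [hσ0, hA]
        show seqVal (dropAt c j) ((List.replicate j 1 ++ []) ++ r) =
          seqVal (fun d => c (d + (j+1))) r
        rw [List.append_nil, seqVal_shift]
        congr 1
        funext d
        show dropAt c j (d + j) = c (d + (j + 1))
        unfold dropAt
        rw [if_neg (by omega)]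
        exact congrArg c (by omega)
      all_goals simp at hq
  · intro q hnp
    show seqVal (dropAt c j) q = seqVal c q
    refine seqVal_congr q ?_
    rintro m rfl
    have hmj : m < j := by
      by_contra hcon
      exact hnp (repl_prefix2 (by omega))
    unfold dropAt
    rw [if_pos hmj]

noncomputable def natOf (β : Ordinal) : ℕ :=
  if h : β < Ordinal.omega0 then Classical.choose (Ordinal.lt_omega0.mp h) else 0

lemma natOf_spec {β : Ordinal} (h : β < Ordinal.omega0) : ((natOf β : ℕ) : Ordinal) = β := by
  rw [natOf, dif_pos h]
  exact (Classical.choose_spec (Ordinal.lt_omega0.mp h)).symm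

lemma natOf_cast (n : ℕ) : natOf (n : Ordinal) = n := by
  have := natOf_spec (Ordinal.nat_lt_omega0 n)
  exact_mod_cast this

/-- The `β`-th term of the length-`ω` reduction. -/
noncomputable def Fseq (cs : ℕ → ℕ → F14) (hc : ∀ m d, ar14 (cs m d) = 0)
    (tl : Term F14 V14 ar14) (β : Ordinal) : Term F14 V14 ar14 :=
  if β < Ordinal.omega0 then seqTerm (cs (natOf β)) (hc _) else tl

/-- The `β`-th step position of the length-`ω` reduction. -/
noncomputable def Pseq (pos : ℕ → ℕ) (β : Ordinal) : Pos :=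
  List.replicate (pos (natOf β)) 1

lemma Fseq_nat (cs : ℕ → ℕ → F14) (hc : ∀ m d, ar14 (cs m d) = 0)
    (tl : Term F14 V14 ar14) (n : ℕ) :
    Fseq cs hc tl (n : Ordinal) = seqTerm (cs n) (hc n) := by
  unfold Fseq
  rw [if_pos (Ordinal.nat_lt_omega0 n)]
  exact Term.ext' (by rw [seqTerm_val, seqTerm_val, natOf_cast])

lemma Fseq_omega (cs : ℕ → ℕ → F14) (hc : ∀ m d, ar14 (cs m d) = 0)
    (tl : Term F14 V14 ar14) :
    Fseq cs hc tl Ordinal.omega0 = tl := by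
  unfold Fseq
  rw [if_neg (lt_irrefl _)]

lemma Pseq_nat (pos : ℕ → ℕ) (n : ℕ) :
    Pseq pos (n : Ordinal) = List.replicate (pos n) 1 := by
  unfold Pseq
  rw [natOf_cast]

/-- Builder for strongly convergent reductions of length `ω` along a
sequence of `dropAt` steps. -/
lemma build_scred (cs : ℕ → ℕ → F14) (hc : ∀ m d, ar14 (cs m d) = 0)
    (pos : ℕ → ℕ)
    (hstep : ∀ m, cs (m+1) = dropAt (cs m) (pos m))
    (tl : Term F14 V14 ar14)
    (hconv : ∀ k : ℕ, ∀ m, k ≤ m →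
      AgreeUpTo k (seqTerm (cs m) (hc m)) tl ∧ k ≤ pos m) :
    ∃ (f : Ordinal → Term F14 V14 ar14) (p : Ordinal → Pos),
      IsSCRed S14 Ordinal.omega0 f p (seqTerm (cs 0) (hc 0)) tl := by
  refine ⟨Fseq cs hc tl, Pseq pos, ?_, ?_, ?_, ?_⟩
  · have := Fseq_nat cs hc tl 0
    rwa [Nat.cast_zero] at this
  · exact Fseq_omega cs hc tl
  · intro β hβ
    obtain ⟨n, rfl⟩ := Ordinal.lt_omega0.mp hβ
    have e1 : ((n : Ordinal) + 1) = ((n+1 : ℕ) : Ordinal) := (Nat.cast_add_one n).symm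
    rw [e1, Fseq_nat, Fseq_nat, Pseq_nat]
    have e2 : seqTerm (cs (n+1)) (hc (n+1)) =
        seqTerm (dropAt (cs n) (pos n)) (dropAt_arZero (hc n) (pos n)) :=
      Term.ext' (by rw [seqTerm_val, seqTerm_val, hstep])
    rw [e2]
    exact step_drop (cs n) (hc n) (pos n)
  · intro l hle hlim k
    have hl : l = Ordinal.omega0 := le_antisymm hle (Ordinal.omega0_le_of_isSuccLimit hlim)
    subst hl
    refine ⟨(k : Ordinal), Ordinal.nat_lt_omega0 k, ?_⟩
    intro γ hγ1 hγ2
    obtain ⟨m, rfl⟩ := Ordinal.lt_omega0.mp hγ2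
    have hm : k ≤ m := Nat.cast_le.mp hγ1
    rw [Fseq_nat, Fseq_omega, Pseq_nat]
    refine ⟨(hconv k m hm).1, ?_⟩
    simpa using (hconv k m hm).2

def parity : ℕ → F14 := fun d => if d % 2 = 0 then F14.a else F14.b

def cA (n : ℕ) : ℕ → F14 := fun d => if d ≤ n ∨ (d - n) % 2 = 0 then F14.a else F14.b
def cB (n : ℕ) : ℕ → F14 := fun d => if d < n then F14.b
    else if (d - n) % 2 = 0 then F14.a else F14.b

lemma cA_ar : ∀ n d, ar14 (cA n d) = 0 := by
  intro n d; simp only [cA]; split_ifs <;> rfl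
lemma cB_ar : ∀ n d, ar14 (cB n d) = 0 := by
  intro n d; simp only [cB]; split_ifs <;> rfl

lemma cA_zero : cA 0 = parity := by
  funext d; simp only [cA, parity]; split_ifs <;> first | rfl | omega

lemma cB_zero : cB 0 = parity := by
  funext d; simp only [cB, parity]; split_ifs <;> first | rfl | omega

lemma cA_step (n : ℕ) : cA (n+1) = dropAt (cA n) (n+1) := by
  funext d; simp only [cA, dropAt]; split_ifs <;> first | rfl | omega

lemma cB_step (n : ℕ) : cB (n+1) = dropAt (cB n) n := by
  funext d; simp only [cB, dropAt]; split_ifs <;> first | rfl | omega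

lemma spine_eq_seq (c : Bool → F14) (q : Pos) (lvl : Bool) :
    spineVal c lvl q = seqVal (fun d => c (if d % 2 = 0 then lvl else !lvl)) q := by
  induction q generalizing lvl with
  | nil => rfl
  | cons i p ih =>
      by_cases h1 : i = 1
      · subst h1
        show spineVal c lvl (1 :: p) = _
        rw [seqVal_one]
        have : spineVal c lvl (1 :: p) = spineVal c (!lvl) p := by simp [spineVal]
        rw [this, ih (!lvl)]
        congr 1
        funext d
        congr 1
        by_cases hd : d % 2 = 0
        · have : ¬ (d + 1) % 2 = 0 := by omega
          simp [hd, this]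
        · have : (d + 1) % 2 = 0 := by omega
          simp [hd, this]
      · by_cases h2 : i = 2 ∧ p = []
        · obtain ⟨rfl, rfl⟩ := h2
          show spineVal c lvl [2] = seqVal _ [2]
          rw [seqVal_two]
          simp [spineVal]
        · have e1 : spineVal c lvl (i :: p) = none := by
            simp only [spineVal, h1, if_false, if_neg h2]
          have e2 : seqVal (fun d => c (if d % 2 = 0 then lvl else !lvl)) (i :: p) = none := by
            simp only [seqVal, h1, if_false, if_neg h2]
          rw [e1, e2]

lemma s14_val : s14.val = seqVal parity := by
  funext q
  show spineVal _ true q = _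
  rw [spine_eq_seq]
  congr 1
  funext d
  unfold parity
  by_cases hd : d % 2 = 0 <;> simp [hd]

lemma t14a_val : t14a.val = seqVal (fun _ => F14.a) := by
  funext q
  show spineVal _ true q = _
  rw [spine_eq_seq]

lemma t14b_val : t14b.val = seqVal (fun _ => F14.b) := by
  funext q
  show spineVal _ true q = _
  rw [spine_eq_seq]

lemma s14_eqA : s14 = seqTerm (cA 0) (cA_ar 0) :=
  Term.ext' (by rw [s14_val, seqTerm_val, cA_zero])

lemma s14_eqB : s14 = seqTerm (cB 0) (cB_ar 0) :=
  Term.ext' (by rw [s14_val, seqTerm_val, cB_zero])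

lemma t14a_eq : t14a = seqTerm (fun _ => F14.a) (fun _ => rfl) :=
  Term.ext' (by rw [t14a_val]; rfl)

lemma t14b_eq : t14b = seqTerm (fun _ => F14.b) (fun _ => rfl) :=
  Term.ext' (by rw [t14b_val]; rfl)

lemma sc_to_a : ∃ (f : Ordinal → Term F14 V14 ar14) (p : Ordinal → Pos),
    IsSCRed S14 Ordinal.omega0 f p s14 t14a := by
  have hcv : ∀ k : ℕ, ∀ m, k ≤ m →
      AgreeUpTo k (seqTerm (cA m) (cA_ar m)) t14a ∧ k ≤ m + 1 := by
    intro k m hm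
    constructor
    · intro q hq
      rw [seqTerm_val, t14a_val]
      refine seqVal_congr q ?_
      rintro m' rfl
      have : m' + 1 ≤ k := by simpa using hq
      simp only [cA]
      rw [if_pos (by omega)]
    · omega
  obtain ⟨f, p, h⟩ := build_scred cA cA_ar (fun n => n + 1) cA_step t14a hcv
  exact ⟨f, p, by rwa [← s14_eqA] at h⟩

lemma sc_to_b : ∃ (f : Ordinal → Term F14 V14 ar14) (p : Ordinal → Pos),
    IsSCRed S14 Ordinal.omega0 f p s14 t14b := by
  have hcv : ∀ k : ℕ, ∀ m, k ≤ m →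
      AgreeUpTo k (seqTerm (cB m) (cB_ar m)) t14b ∧ k ≤ m := by
    intro k m hm
    constructor
    · intro q hq
      rw [seqTerm_val, t14b_val]
      refine seqVal_congr q ?_
      rintro m' rfl
      have : m' + 1 ≤ k := by simpa using hq
      simp only [cB]
      rw [if_pos (by omega)]
    · omega
  obtain ⟨f, p, h⟩ := build_scred cB cB_ar (fun n => n) cB_step t14b hcv
  exact ⟨f, p, by rwa [← s14_eqB] at h⟩

/-- Any step from a constant-spine term yields the same term. -/
lemma const_step (c0 : F14) (h0 : ∀ m : ℕ, ar14 ((fun _ => c0) m) = 0)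
    (hne : c0 ≠ F14.f) (q : Pos) (t' : Term F14 V14 ar14)
    (h : StepAt S14 q (seqTerm (fun _ => c0) h0) t') :
    t' = seqTerm (fun _ => c0) h0 := by
  obtain ⟨ρ, σ, hm, hi, hout⟩ := h
  have hroot : seqVal (fun _ => c0) (q ++ []) = some (Sum.inl F14.f) :=
    hm.1 [] F14.f (by rw [lhs_val]; simp)
  rw [List.append_nil] at hroot
  rcases seqVal_cases q with ⟨m, rfl⟩ | ⟨m, rfl⟩ | hn
  · have hsub : SubtreeEq (seqTerm (fun _ => c0) h0) (List.replicate m 1 ++ [1]) (σ 0) :=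
      hm.2 [1] 0 (by rw [lhs_val]; simp)
    have hsub' : SubtreeEq t' (List.replicate m 1 ++ []) (σ 0) :=
      hi.2 [] 0 (by rw [rhs_val]; simp)
    apply Term.ext'
    funext q'
    by_cases hp : (List.replicate m 1 : Pos) <+: q'
    · obtain ⟨r, rfl⟩ := hp
      have e1 : t'.val (List.replicate m 1 ++ r) = (σ 0).val r := by
        have := hsub' r
        rwa [List.append_nil] at this
      have e2 : (σ 0).val r = seqVal (fun _ => c0) ((List.replicate m 1 ++ [1]) ++ r) :=
        (hsub r).symm
      rw [e1, e2]
      show _ = seqVal (fun _ => c0) (List.replicate m 1 ++ r)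
      have e3 : (List.replicate m 1 ++ [1] : Pos) = List.replicate (m+1) 1 :=
        List.replicate_succ'.symm
      rw [e3, seqVal_shift, seqVal_shift]
    · rw [hout q' hp]
  · rw [seqVal_repl2] at hroot
    exact absurd (by simpa using hroot) hne
  · rw [hn] at hroot
    simp at hroot

/-- The only (strongly convergent) reduct of a constant-spine term is itself. -/
lemma const_ired (c0 : F14) (h0 : ∀ m : ℕ, ar14 ((fun _ => c0) m) = 0)
    (hne : c0 ≠ F14.f) (u : Term F14 V14 ar14)
    (h : IRed S14 (seqTerm (fun _ => c0) h0) u) : u = seqTerm (fun _ => c0) h0 := by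
  obtain ⟨α, f, p, h0', hα, hstep, hlim⟩ := h
  suffices key : ∀ β, β ≤ α → f β = seqTerm (fun _ => c0) h0 by
    rw [← hα]; exact key α le_rfl
  intro β
  induction β using Ordinal.limitRecOn with
  | zero => intro _; exact h0'
  | add_one β ih =>
      intro hle
      have hβ : β < α := by rwa [Ordinal.add_one_eq_succ, Order.succ_le_iff] at hle
      have hs := hstep β hβ
      rw [ih hβ.le] at hs
      exact const_step c0 h0 hne _ _ hs
  | limit l hl ih =>
      intro hle
      have hag : ∀ k, AgreeUpTo k (seqTerm (fun _ => c0) h0) (f l) := by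
        intro k
        obtain ⟨β, hβl, hspec⟩ := hlim l hle hl k
        have := (hspec β le_rfl hβl).1
        rwa [ih β hβl (le_trans hβl.le hle)] at this
      exact Term.ext' (funext fun q => (hag q.length q le_rfl).symm)

lemma no_common : ¬ ∃ u : Term F14 V14 ar14, IRed S14 t14a u ∧ IRed S14 t14b u := by
  rintro ⟨u, hA, hB⟩
  rw [t14a_eq] at hA
  rw [t14b_eq] at hB
  have eA := const_ired F14.a (fun _ => rfl) (by simp) u hA
  have eB := const_ired F14.b (fun _ => rfl) (by simp) u hB
  have : seqTerm (fun _ => F14.a) (fun _ => rfl) = seqTerm (fun _ => F14.b) (fun _ => rfl) := by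
    rw [← eA, ← eB]
  have h2 := congrArg (fun t : Term F14 V14 ar14 => t.val [2]) this
  change seqVal (fun _ => F14.a) [2] = seqVal (fun _ => F14.b) [2] at h2
  rw [seqVal_two, seqVal_two] at h2
  exact absurd (by simpa using h2) (by simp : F14.a ≠ F14.b)


/-- In the orthogonal iTRS over the signature
`{f (binary), a, b (constants)}` with the single collapsing rule
`f(x, y) → x`, the infinite term `s = f(f(s, b), a)` rewrites by strongly
convergent reductions of length `ω` both to `t₁ = f(t₁, a)` and to
`t₂ = f(t₂, b)`, and `t₁` and `t₂` have no common reduct; hence this iTRS is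
not infinitarily confluent. -/
theorem collapsing_not_confluent :
    Collapsing S14 PUnit.unit ∧
    (∃ (f : Ordinal → Term F14 V14 ar14) (p : Ordinal → Pos),
      IsSCRed S14 Ordinal.omega0 f p s14 t14a) ∧
    (∃ (f : Ordinal → Term F14 V14 ar14) (p : Ordinal → Pos),
      IsSCRed S14 Ordinal.omega0 f p s14 t14b) ∧
    (¬ ∃ u : Term F14 V14 ar14, IRed S14 t14a u ∧ IRed S14 t14b u) ∧
    ¬ (∀ t t₁ t₂ : Term F14 V14 ar14, IRed S14 t t₁ → IRed S14 t t₂ →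
        ∃ u, IRed S14 t₁ u ∧ IRed S14 t₂ u) := by
  refine ⟨⟨0, rfl⟩, sc_to_a, sc_to_b, no_common, ?_⟩
  intro H
  obtain ⟨fA, pA, hA⟩ := sc_to_a
  obtain ⟨fB, pB, hB⟩ := sc_to_b
  exact no_common (H s14 t14a t14b ⟨_, fA, pA, hA⟩ ⟨_, fB, pB, hB⟩)

end WOInf
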